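/- The measure π(b) := G(b,b)², where G(b,b) := [ ∏_{j=1}^{d(1)} Q q^{L + x_j − N→^1_{x_j}(b)} ] · ζ_0 · [ ∏_{i=1}^{d(−1)} q^{L − y_i − N→^1_{y_i}(b)} ] with ζ_0 := Q q^{L−d(1)}, 1, or q^{L−d(1)} according as b(0) = 1, 0, or −1, is reversible for the single-species open ASEP: for all configurations b, b′ one has π(b) 𝓛(b,b′) = π(b′) 𝓛(b′,b), where 𝓛 is the open ASEP generator. -/

import Mathlib

open Matrix BigOperators Finset

noncomputable section

namespace Stmt9

/-- Configurations of the single-species open ASEP on sites `{0,1,…,L}`.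
Values are encoded in `Fin 3`: `0 ↦ −1`, `1 ↦ 0` (hole), `2 ↦ 1`;
this encoding is order-preserving. -/
abbrev Conf (L : ℕ) := Fin (L + 1) → Fin 3

/-- `N→¹_x(b)`: the number of sites strictly to the right of `x` with `b`-value `1`. -/
def Nr1 (L : ℕ) (b : Conf L) (x : Fin (L + 1)) : ℕ :=
  (Finset.univ.filter (fun y : Fin (L + 1) => x < y ∧ b y = 2)).card

/-- `d(1)`: the number of sites in `{1,…,L}` with `b`-value `1`. -/
def d1 (L : ℕ) (b : Conf L) : ℕ :=
  (Finset.univ.filter (fun x : Fin (L + 1) => 0 < (x : ℕ) ∧ b x = 2)).card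

/-- `ζ₀ = Q q^{L−d(1)}`, `1`, or `q^{L−d(1)}` according as `b(0) = 1`, `0`, or `−1`. -/
def zeta0 (L : ℕ) (q Q : ℝ) (b : Conf L) : ℝ :=
  if b 0 = 2 then Q * q ^ ((L : ℤ) - (d1 L b : ℤ))
  else if b 0 = 1 then 1
  else q ^ ((L : ℤ) - (d1 L b : ℤ))

/-- `G(b,b) = [∏_{j=1}^{d(1)} Q q^{L+x_j−N→¹_{x_j}(b)}] ζ₀ [∏_{i=1}^{d(−1)} q^{L−y_i−N→¹_{y_i}(b)}]`. -/
def Gfun (L : ℕ) (q Q : ℝ) (b : Conf L) : ℝ :=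
  (∏ x ∈ Finset.univ.filter (fun x : Fin (L + 1) => 0 < (x : ℕ) ∧ b x = 2),
      Q * q ^ ((L : ℤ) + ((x : ℕ) : ℤ) - (Nr1 L b x : ℤ))) *
    zeta0 L q Q b *
    (∏ y ∈ Finset.univ.filter (fun y : Fin (L + 1) => 0 < (y : ℕ) ∧ b y = 0),
      q ^ ((L : ℤ) - ((y : ℕ) : ℤ) - (Nr1 L b y : ℤ)))

/-- Bulk off-diagonal rates of the open ASEP generator. -/
def bulk (L : ℕ) (q : ℝ) (η η' : Conf L) : ℝ :=
  ∑ x : Fin (L + 1),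
    if h : (x : ℕ) + 1 < L + 1 then
      (if η' = η ∘ Equiv.swap x ⟨(x : ℕ) + 1, h⟩ ∧ η x ≠ η ⟨(x : ℕ) + 1, h⟩ then
        (if η ⟨(x : ℕ) + 1, h⟩ < η x then q ^ 2 else 1)
      else 0)
    else 0

/-- Boundary off-diagonal rates of the open ASEP generator at site `0`. -/
def bdry (L : ℕ) (Q : ℝ) (η η' : Conf L) : ℝ :=
  if (∀ z : Fin (L + 1), z ≠ 0 → η' z = η z) ∧ η 0 = 2 ∧ η' 0 = 0 then 1
  else if (∀ z : Fin (L + 1), z ≠ 0 → η' z = η z) ∧ η 0 = 0 ∧ η' 0 = 2 then Q ^ 2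
  else 0

/-- The generator `𝓛` of the single-species open ASEP on `{0,…,L}`. -/
def gen (L : ℕ) (q Q : ℝ) : Matrix (Conf L) (Conf L) ℝ :=
  fun η η' =>
    if η' = η then
      -∑ η'' : Conf L,
        (if η'' = η then 0 else bulk L q η η'' + bdry L Q η η'')
    else bulk L q η η' + bdry L Q η η'

/-!
Including site `0` (through `ζ₀`, since `N→¹_0 = d(1)`), `G(b,b)` is a product over all sites of
`Q^[b(x) = 1] q^(s²(L − N→¹_x(b)) + s x)` with `s = b(x) ∈ {−1, 0, 1}`. An adjacent swap at
`(x, x+1)` or a flip at site `0` leaves `N→¹_z` unchanged except at `z = x`, so only the factors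
at the sites involved change; their product is multiplied by `q` (when the larger value moves
right) resp. by `Q` (when `b(0) = 1` becomes `−1`). Squaring gives exactly the ratio of the
forward and backward rates, which is detailed balance.
-/

lemma prod_univ_eq_mul_of_eq_off {ι M : Type*} [Fintype ι] [DecidableEq ι] [CommMonoid M]
    {f g : ι → M} (s : Finset ι) (c : M) (hout : ∀ i ∉ s, f i = g i)
    (hin : ∏ i ∈ s, f i = c * ∏ i ∈ s, g i) : ∏ i, f i = c * ∏ i, g i := by
  rw [← prod_mul_prod_compl s f, ← prod_mul_prod_compl s g, hin,
    prod_congr rfl fun i hi => hout i (mem_compl.1 hi), mul_assoc]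

lemma fin3_cases (v : Fin 3) : v = 0 ∨ v = 1 ∨ v = 2 := by fin_cases v <;> simp

section Nr1

variable {L : ℕ}

lemma Nr1_congr {b b' : Conf L} {z : Fin (L + 1)} (h : ∀ y, z < y → b' y = b y) :
    Nr1 L b' z = Nr1 L b z := by
  unfold Nr1
  congr 1
  exact filter_congr fun y _ => and_congr_right fun hy => by rw [h y hy]

lemma Nr1_comp_perm (b : Conf L) (σ : Equiv.Perm (Fin (L + 1))) {z : Fin (L + 1)}
    (hσ : ∀ y, z < σ y ↔ z < y) : Nr1 L (b ∘ σ) z = Nr1 L b z :=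
  card_equiv σ fun y => by simp [hσ]

lemma Nr1_succ (b : Conf L) {x x1 : Fin (L + 1)} (hx1 : (x1 : ℕ) = x + 1) :
    Nr1 L b x = (if b x1 = 2 then 1 else 0) + Nr1 L b x1 := by
  have hsplit : ∀ y, (if x < y ∧ b y = 2 then 1 else 0) =
      (if y = x1 then (if b y = 2 then 1 else 0) else 0) +
        (if x1 < y ∧ b y = 2 then 1 else 0) := by
    intro y
    simp only [Fin.lt_def, Fin.ext_iff, hx1]
    split_ifs <;> omega
  simp only [Nr1, card_filter, hsplit, sum_add_distrib, sum_ite_eq', mem_univ, if_true]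

lemma Nr1_zero (b : Conf L) : Nr1 L b 0 = d1 L b := by
  unfold Nr1 d1
  simp only [Fin.lt_def, Fin.val_zero]

end Nr1

def spin (v : Fin 3) : ℤ := (v : ℤ) - 1

def siteExp (L : ℕ) (b : Conf L) (x : Fin (L + 1)) : ℤ :=
  spin (b x) ^ 2 * ((L : ℤ) - Nr1 L b x) + spin (b x) * (x : ℕ)

def siteWeight (L : ℕ) (q Q : ℝ) (b : Conf L) (x : Fin (L + 1)) : ℝ :=
  (if b x = 2 then Q else 1) * q ^ siteExp L b x

section weights

variable {L : ℕ} {q Q : ℝ}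

lemma Gfun_eq_prod_siteWeight (b : Conf L) : Gfun L q Q b = ∏ x, siteWeight L q Q b x := by
  have hzeta : zeta0 L q Q b = siteWeight L q Q b 0 := by
    rcases fin3_cases (b 0) with h | h | h <;> simp [zeta0, siteWeight, siteExp, spin, h, Nr1_zero]
  have hsite : ∀ i : Fin L,
      (if b i.succ = 2 then Q * q ^ ((L : ℤ) + (i.succ : ℕ) - Nr1 L b i.succ) else 1) *
        (if b i.succ = 0 then q ^ ((L : ℤ) - (i.succ : ℕ) - Nr1 L b i.succ) else 1) =
      siteWeight L q Q b i.succ := by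
    intro i
    rcases fin3_cases (b i.succ) with h | h | h <;>
      simp [siteWeight, siteExp, spin, h, -mul_eq_mul_left_iff] <;> ring_nf
  rw [Gfun, prod_filter, prod_filter, Fin.prod_univ_succ, Fin.prod_univ_succ, Fin.prod_univ_succ,
    hzeta, ← prod_congr rfl fun i _ => hsite i, prod_mul_distrib]
  simp only [Fin.val_zero, lt_self_iff_false, false_and, if_false, Fin.val_succ, Nat.succ_pos,
    true_and]
  ring

lemma siteWeight_congr {b b' : Conf L} {z : Fin (L + 1)} (hb : b' z = b z)
    (hN : Nr1 L b' z = Nr1 L b z) : siteWeight L q Q b' z = siteWeight L q Q b z := by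
  simp only [siteWeight, siteExp, hb, hN]

-- The change of `siteExp` on `{x, x+1}` when the larger value moves from `x` to `x+1`.
lemma spin_exchange {a c : Fin 3} (h : c < a) :
    spin a - spin c + spin a ^ 2 * (if c = 2 then 1 else 0) -
      spin c ^ 2 * (if a = 2 then 1 else 0) = 1 := by
  revert a c
  decide

lemma Gfun_comp_swap_of_lt (hq : q ≠ 0) (b : Conf L) {x x1 : Fin (L + 1)}
    (hx1 : (x1 : ℕ) = x + 1) (hlt : b x1 < b x) :
    Gfun L q Q (b ∘ Equiv.swap x x1) = q * Gfun L q Q b := by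
  have hne : x ≠ x1 := by rintro rfl; omega
  set b' := b ∘ Equiv.swap x x1
  have hb'x : b' x = b x1 := by simp [b']
  have hb'x1 : b' x1 = b x := by simp [b']
  have hN : ∀ z ≠ x, Nr1 L b' z = Nr1 L b z := fun z hz => Nr1_comp_perm b _ fun y => by
    simp only [Equiv.swap_apply_def]
    split_ifs <;> simp only [Fin.lt_def, Fin.ext_iff] at * <;> omega
  have hexp : siteExp L b' x + siteExp L b' x1 = 1 + (siteExp L b x + siteExp L b x1) := by
    simp only [siteExp, hb'x, hb'x1, Nr1_succ b hx1, Nr1_succ b' hx1, hN x1 hne.symm, hx1]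
    push_cast
    linear_combination spin_exchange hlt
  rw [Gfun_eq_prod_siteWeight, Gfun_eq_prod_siteWeight]
  refine prod_univ_eq_mul_of_eq_off {x, x1} q (fun z hz => ?_) ?_
  · simp only [mem_insert, mem_singleton, not_or] at hz
    exact siteWeight_congr (by simp [b', Equiv.swap_apply_of_ne_of_ne hz.1 hz.2]) (hN z hz.1)
  · simp only [prod_pair hne, siteWeight, hb'x, hb'x1]
    rw [mul_mul_mul_comm, ← zpow_add₀ hq, hexp, zpow_add₀ hq, zpow_one, zpow_add₀ hq]
    ring

lemma Gfun_eq_mul_of_bdry {b b' : Conf L} (h : ∀ z ≠ 0, b' z = b z) (h2 : b 0 = 2)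
    (h0 : b' 0 = 0) : Gfun L q Q b = Q * Gfun L q Q b' := by
  have hN : ∀ z, Nr1 L b z = Nr1 L b' z := fun z =>
    Nr1_congr fun y hy => (h y (Fin.ne_zero_of_lt hy)).symm
  rw [Gfun_eq_prod_siteWeight, Gfun_eq_prod_siteWeight]
  refine prod_univ_eq_mul_of_eq_off {0} Q
    (fun z hz => siteWeight_congr (h z (by simpa using hz)).symm (hN z)) ?_
  simp [siteWeight, siteExp, spin, h2, h0, hN 0]

lemma adjSwap_symm {b b' : Conf L} {x x1 : Fin (L + 1)}
    (h : b' = b ∘ Equiv.swap x x1 ∧ b x ≠ b x1) :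
    b = b' ∘ Equiv.swap x x1 ∧ b' x ≠ b' x1 := by
  obtain ⟨rfl, hne⟩ := h
  exact ⟨by ext; simp, by simpa using hne.symm⟩

lemma bulk_balance (hq : q ≠ 0) (b b' : Conf L) :
    Gfun L q Q b ^ 2 * bulk L q b b' = Gfun L q Q b' ^ 2 * bulk L q b' b := by
  simp only [bulk, mul_sum]
  refine sum_congr rfl fun x _ => ?_
  by_cases hx : (x : ℕ) + 1 < L + 1
  swap
  · simp [hx]
  rw [dif_pos hx, dif_pos hx]
  set x1 : Fin (L + 1) := ⟨x + 1, hx⟩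
  by_cases hc : b' = b ∘ Equiv.swap x x1 ∧ b x ≠ b x1
  swap
  · rw [if_neg hc, if_neg fun h => hc (adjSwap_symm h)]
    ring
  rw [if_pos hc, if_pos (adjSwap_symm hc)]
  obtain ⟨rfl, hne⟩ := hc
  simp only [Function.comp_apply, Equiv.swap_apply_left, Equiv.swap_apply_right]
  rcases hne.lt_or_gt with hlt | hgt
  · have hG := Gfun_comp_swap_of_lt (Q := Q) hq (b ∘ Equiv.swap x x1) (x1 := x1) rfl
      (by simpa using hlt)
    rw [← (adjSwap_symm ⟨rfl, hne⟩).1] at hG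
    rw [if_neg hlt.not_gt, if_pos hlt, hG]
    ring
  · rw [if_pos hgt, if_neg hgt.not_gt, Gfun_comp_swap_of_lt hq b rfl hgt]
    ring

lemma bdry_balance_of_one_to_negOne {b b' : Conf L} (h : ∀ z ≠ 0, b' z = b z) (h2 : b 0 = 2)
    (h0 : b' 0 = 0) : Gfun L q Q b ^ 2 * bdry L Q b b' = Gfun L q Q b' ^ 2 * bdry L Q b' b := by
  rw [bdry, bdry, if_pos ⟨h, h2, h0⟩, if_neg (by simp [h0]),
    if_pos ⟨fun z hz => (h z hz).symm, h0, h2⟩, Gfun_eq_mul_of_bdry h h2 h0]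
  ring

lemma bdry_eq_zero {b b' : Conf L}
    (h : ¬ ((∀ z ≠ 0, b' z = b z) ∧ (b 0 = 2 ∧ b' 0 = 0 ∨ b 0 = 0 ∧ b' 0 = 2))) :
    bdry L Q b b' = 0 := by
  rw [bdry, if_neg fun h' => h ⟨h'.1, .inl h'.2⟩, if_neg fun h' => h ⟨h'.1, .inr h'.2⟩]

lemma bdry_balance (b b' : Conf L) :
    Gfun L q Q b ^ 2 * bdry L Q b b' = Gfun L q Q b' ^ 2 * bdry L Q b' b := by
  by_cases hA : ∀ z ≠ 0, b' z = b z
  · have hA' : ∀ z ≠ 0, b z = b' z := fun z hz => (hA z hz).symm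
    by_cases h20 : b 0 = 2 ∧ b' 0 = 0
    · exact bdry_balance_of_one_to_negOne hA h20.1 h20.2
    by_cases h02 : b 0 = 0 ∧ b' 0 = 2
    · exact (bdry_balance_of_one_to_negOne hA' h02.2 h02.1).symm
    rw [bdry_eq_zero (by tauto), bdry_eq_zero (by tauto), mul_zero, mul_zero]
  · have hA' : ¬ ∀ z ≠ 0, b z = b' z := fun h => hA fun z hz => (h z hz).symm
    rw [bdry_eq_zero (by tauto), bdry_eq_zero (by tauto), mul_zero, mul_zero]

end weights

theorem Gsquared_reversible_for_open_ASEP_general (L : ℕ) (q Q : ℝ) (hq0 : 0 < q) (b b' : Conf L) :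
    (Gfun L q Q b) ^ 2 * gen L q Q b b' = (Gfun L q Q b') ^ 2 * gen L q Q b' b := by
  by_cases hbb : b' = b
  · subst hbb
    rfl
  simp only [gen, if_neg hbb, if_neg (Ne.symm hbb), mul_add, bulk_balance hq0.ne' b b',
    bdry_balance b b']

/-- **Reversibility** (Proposition, part (c), in the proof of Theorem 1.3):
the measure `π(b) = G(b,b)²` is reversible for the single-species open ASEP:
`π(b) 𝓛(b,b′) = π(b′) 𝓛(b′,b)` for all configurations `b, b′`. -/
theorem Gsquared_reversible_for_open_ASEP (L : ℕ) (hL : 1 ≤ L)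
    (q Q : ℝ) (hq0 : 0 < q) (hq1 : q < 1) (hQ0 : 0 < Q) (hQ1 : Q < 1)
    (b b' : Conf L) :
    (Gfun L q Q b) ^ 2 * gen L q Q b b' = (Gfun L q Q b') ^ 2 * gen L q Q b' b :=
  Gsquared_reversible_for_open_ASEP_general L q Q hq0 b b'

end Stmt9

end
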